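/- Fix 0 < ε < d⁻⁴·(1/(16π))² and let d ≥ 2. Suppose W_i ∈ ℝ^{n_i×n_{i−1}} satisfies the Weight Distribution Condition with constant ε for i = 1,…,d. Then for all nonzero x, y ∈ ℝ^k, writing x_d := (Π_{i=d}^1 W_{i,+,x})·x, y_d := (Π_{i=d}^1 W_{i,+,y})·y, θ_d := ∠(x_d, y_d), and θ̄_d := g^{∘d}(∠(x,y)), we have |θ_d − θ̄_d| ≤ 4·d·√ε. -/

import Mathlib

open Real Filter Set MeasureTheory ProbabilityTheory Matrix
open scoped Classical BigOperators NNReal ENNReal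

noncomputable section

namespace DPR

/-- Euclidean dot product on `Fin n → ℝ`. -/
def dotp {n : ℕ} (u v : Fin n → ℝ) : ℝ := ∑ i, u i * v i

/-- Euclidean norm on `Fin n → ℝ`. -/
def nrm {n : ℕ} (v : Fin n → ℝ) : ℝ := Real.sqrt (dotp v v)

/-- Angle between two vectors. -/
def angl {n : ℕ} (u v : Fin n → ℝ) : ℝ := Real.arccos (dotp u v / (nrm u * nrm v))

/-- Spectral norm of a matrix: the operator norm of the induced map between
Euclidean spaces. -/
def specNorm {a b : ℕ} (M : Matrix (Fin a) (Fin b) ℝ) : ℝ :=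
  ‖LinearMap.toContinuousLinearMap (Matrix.toEuclideanLin M)‖

/-- The symmetric matrix `M_{x̂↔ŷ}` sending `x̂ ↦ ŷ`, `ŷ ↦ x̂` and vanishing on
`span{x,y}ᗮ`. -/
def swapMat {n : ℕ} (x y : Fin n → ℝ) : Matrix (Fin n) (Fin n) ℝ :=
  let u := (nrm x)⁻¹ • x
  let v := (nrm y)⁻¹ • y
  let c := dotp u v
  let w := v - c • u
  if dotp w w = 0 then c • Matrix.vecMulVec u u
  else
    c • Matrix.vecMulVec u u + Matrix.vecMulVec u w + Matrix.vecMulVec w u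
      - (c / dotp w w) • Matrix.vecMulVec w w

/-- `Q_{x,y} = ((π − θ)/(2π))·I + (sin θ/(2π))·M_{x̂↔ŷ}`. -/
def Qmat {k : ℕ} (x y : Fin k → ℝ) : Matrix (Fin k) (Fin k) ℝ :=
  ((π - angl x y) / (2 * π)) • (1 : Matrix (Fin k) (Fin k) ℝ)
    + (Real.sin (angl x y) / (2 * π)) • swapMat x y

/-- `Φ_{z,w} = ((π − 2θ)/π)·I + (2 sin θ/π)·M_{ẑ↔ŵ}`. -/
def Phi {n : ℕ} (z w : Fin n → ℝ) : Matrix (Fin n) (Fin n) ℝ :=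
  ((π - 2 * angl z w) / π) • (1 : Matrix (Fin n) (Fin n) ℝ)
    + (2 * Real.sin (angl z w) / π) • swapMat z w

/-- `W_{+,v} = diag(1_{Wv>0})·W`. -/
def posPart {a b : ℕ} (W : Matrix (Fin a) (Fin b) ℝ) (v : Fin b → ℝ) :
    Matrix (Fin a) (Fin b) ℝ :=
  Matrix.of fun i j => if 0 < W.mulVec v i then W i j else 0

/-- Weight Distribution Condition with constant `ε`. -/
def WDC {a k : ℕ} (W : Matrix (Fin a) (Fin k) ℝ) (ε : ℝ) : Prop :=
  ∀ x y : Fin k → ℝ, x ≠ 0 → y ≠ 0 →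
    specNorm ((posPart W x)ᵀ * posPart W y - Qmat x y) ≤ ε

/-- `A_z = diag(sgn(Az))·A`. -/
def signedMat {a b : ℕ} (A : Matrix (Fin a) (Fin b) ℝ) (z : Fin b → ℝ) :
    Matrix (Fin a) (Fin b) ℝ :=
  Matrix.of fun i j => Real.sign (A.mulVec z i) * A i j

/-- Entrywise ReLU. -/
def reluV {a : ℕ} (v : Fin a → ℝ) : Fin a → ℝ := fun i => max (v i) 0

/-- Entrywise absolute value. -/
def absV {a : ℕ} (v : Fin a → ℝ) : Fin a → ℝ := fun i => |v i|

/-- The `d`-layer ReLU network `G(x) = relu(W_d ⋯ relu(W_1 x) ⋯)`. -/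
def net (n : ℕ → ℕ) (W : ∀ i : ℕ, Matrix (Fin (n (i + 1))) (Fin (n i)) ℝ) :
    (d : ℕ) → (Fin (n 0) → ℝ) → Fin (n d) → ℝ
  | 0, x => x
  | d + 1, x => reluV ((W d).mulVec (net n W d x))

/-- The product `Π_{i=d}^1 W_{i,+,x}`. -/
def layerProd (n : ℕ → ℕ) (W : ∀ i : ℕ, Matrix (Fin (n (i + 1))) (Fin (n i)) ℝ) :
    (d : ℕ) → (Fin (n 0) → ℝ) → Matrix (Fin (n d)) (Fin (n 0)) ℝ
  | 0, _ => 1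
  | d + 1, x => posPart (W d) ((layerProd n W d x).mulVec x) * layerProd n W d x

/-- The matrix `W_{i+1,+,x}` (the `(i+1)`-st layer, zero-indexed as `i`). -/
def layerPos (n : ℕ → ℕ) (W : ∀ i : ℕ, Matrix (Fin (n (i + 1))) (Fin (n i)) ℝ)
    (i : ℕ) (x : Fin (n 0) → ℝ) : Matrix (Fin (n (i + 1))) (Fin (n i)) ℝ :=
  posPart (W i) ((layerProd n W i x).mulVec x)

/-- `g(θ) = arccos((cos θ·(π − θ) + sin θ)/π)`. -/
def gfun (θ : ℝ) : ℝ := Real.arccos ((Real.cos θ * (π - θ) + Real.sin θ) / π)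

/-- The sequence `θ_0 = θ₀`, `θ_{i+1} = g(θ_i)`. -/
def thetaSeq (θ₀ : ℝ) : ℕ → ℝ
  | 0 => θ₀
  | i + 1 => gfun (thetaSeq θ₀ i)

/-- `ρ_d`. -/
def rho (d : ℕ) : ℝ :=
  -(2 * Real.sin (thetaSeq π d)) / π +
    ((π - 2 * thetaSeq π d) / π) *
      ∑ i ∈ Finset.range d,
        (Real.sin (thetaSeq π i) / π) * ∏ j ∈ Finset.Ico (i + 1) d, (π - thetaSeq π j) / π

/-- The vector `h_{x,y}`. -/
def hvec (d : ℕ) {k : ℕ} (x y : Fin k → ℝ) : Fin k → ℝ :=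
  (-(nrm y / 2 ^ d) * ((π - 2 * thetaSeq (angl x y) d) / π) *
      ∏ i ∈ Finset.range d, (π - thetaSeq (angl x y) i) / π) • ((nrm y)⁻¹ • y) +
    ((1 / 2 ^ d) *
        (nrm x -
          nrm y *
            (2 * Real.sin (thetaSeq (angl x y) d) / π -
              ((π - 2 * thetaSeq (angl x y) d) / π) *
                ∑ i ∈ Finset.range d,
                  (Real.sin (thetaSeq (angl x y) i) / π) *
                    ∏ j ∈ Finset.Ico (i + 1) d, (π - thetaSeq (angl x y) j) / π))) •
      ((nrm x)⁻¹ • x)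

/-- The vector `h̃_{x,y}`. -/
def htil (d : ℕ) {k : ℕ} (x y : Fin k → ℝ) : Fin k → ℝ :=
  (1 / 2 ^ d) •
    ((∏ i ∈ Finset.range d, (π - thetaSeq (angl x y) i) / π) • y +
      (∑ i ∈ Finset.range d,
          (Real.sin (thetaSeq (angl x y) i) / π) *
            ∏ j ∈ Finset.Ico (i + 1) d, (π - thetaSeq (angl x y) j) / π) •
        ((nrm y / nrm x) • x))

/-- The set `S_{ε,x₀}`. -/
def Sset (d : ℕ) {k : ℕ} (ε : ℝ) (x₀ : Fin k → ℝ) : Set (Fin k → ℝ) :=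
  {x | x ≠ 0 ∧ nrm (hvec d x x₀) ≤ ε / 2 ^ d * max (nrm x) (nrm x₀)}

/-- The vector `v̄_{x,y}`. -/
def vbar (n : ℕ → ℕ) (W : ∀ i : ℕ, Matrix (Fin (n (i + 1))) (Fin (n i)) ℝ) (d : ℕ)
    (x y : Fin (n 0) → ℝ) : Fin (n 0) → ℝ :=
  (layerProd n W d x)ᵀ.mulVec ((layerProd n W d x).mulVec x) -
    (layerProd n W d x)ᵀ.mulVec
      ((Phi ((layerProd n W d x).mulVec x) ((layerProd n W d y).mulVec y)).mulVec
        ((layerProd n W d y).mulVec y))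

/-- The objective `f(x) = (1/2)·‖ |A G(x)| − |A G(x₀)| ‖²`. -/
def objf (n : ℕ → ℕ) (W : ∀ i : ℕ, Matrix (Fin (n (i + 1))) (Fin (n i)) ℝ) (d m : ℕ)
    (A : Matrix (Fin m) (Fin (n d)) ℝ) (x₀ x : Fin (n 0) → ℝ) : ℝ :=
  (1 / 2) * nrm (absV (A.mulVec (net n W d x)) - absV (A.mulVec (net n W d x₀))) ^ 2

/-- One-sided directional derivative `D_v f(x) = L`. -/
def HasDirDeriv {k : ℕ} (f : (Fin k → ℝ) → ℝ) (x v : Fin k → ℝ) (L : ℝ) : Prop :=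
  Filter.Tendsto (fun t : ℝ => (f (x + t • v) - f x) / t) (nhdsWithin 0 (Set.Ioi 0)) (nhds L)

/-- Range Restricted Concentration Property with constant `ε`. -/
def RRCP (n : ℕ → ℕ) (W : ∀ i : ℕ, Matrix (Fin (n (i + 1))) (Fin (n i)) ℝ) (d m : ℕ)
    (A : Matrix (Fin m) (Fin (n d)) ℝ) (ε : ℝ) : Prop :=
  ∀ x y x₁ x₂ x₃ x₄ : Fin (n 0) → ℝ, x ≠ 0 → y ≠ 0 →
    |dotp
        ((((signedMat A (net n W d x))ᵀ * signedMat A (net n W d y)) -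
              Phi (net n W d x) (net n W d y)).mulVec
          (net n W d x₁ - net n W d x₂))
        (net n W d x₃ - net n W d x₄)| ≤
      7 * ε * nrm (net n W d x₁ - net n W d x₂) * nrm (net n W d x₃ - net n W d x₄)

/-- Law of an `a × b` matrix with i.i.d. `N(0, v)` entries. -/
def gaussMatrix (a b : ℕ) (v : ℝ≥0) : Measure (Fin a → Fin b → ℝ) :=
  Measure.pi fun _ : Fin a => Measure.pi fun _ : Fin b => gaussianReal 0 v

instance (a b : ℕ) (v : ℝ≥0) : IsProbabilityMeasure (gaussMatrix a b v) := by
  unfold gaussMatrix; infer_instance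

/-- Extend a `Fin d`-indexed family of weight matrices to an `ℕ`-indexed one. -/
def extW (d : ℕ) (n : ℕ → ℕ)
    (ω : ∀ i : Fin d, Fin (n (i.1 + 1)) → Fin (n i.1) → ℝ) (i : ℕ) :
    Matrix (Fin (n (i + 1))) (Fin (n i)) ℝ :=
  if h : i < d then Matrix.of (ω ⟨i, h⟩) else 0

/-- Joint law of the `d` Gaussian weight matrices (variances `1/n_i`) and the
Gaussian measurement matrix (variance `1/m`). -/
def netMeasure (d m : ℕ) (n : ℕ → ℕ) :
    Measure ((∀ i : Fin d, Fin (n (i.1 + 1)) → Fin (n i.1) → ℝ) × (Fin m → Fin (n d) → ℝ)) :=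
  (Measure.pi fun i : Fin d => gaussMatrix (n (i.1 + 1)) (n i.1) ((n (i.1 + 1) : ℝ≥0))⁻¹).prod
    (gaussMatrix m (n d) ((m : ℝ≥0))⁻¹)

/-- The geometric conclusion: outside two small balls around `x₀` and `−ρ_d·x₀`
there is a descent direction, and the origin is a local maximum direction-wise. -/
def DescentConcl (n : ℕ → ℕ) (W : ∀ i : ℕ, Matrix (Fin (n (i + 1))) (Fin (n i)) ℝ)
    (d m : ℕ) (A : Matrix (Fin m) (Fin (n d)) ℝ) (ε K₂ : ℝ) : Prop :=
  ∀ x₀ : Fin (n 0) → ℝ, x₀ ≠ 0 →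
    (∀ x : Fin (n 0) → ℝ, x ≠ 0 →
        ¬nrm (x - x₀) < K₂ * (d : ℝ) ^ 3 * ε ^ ((1 : ℝ) / 4) * nrm x₀ →
        ¬nrm (x + rho d • x₀) < K₂ * (d : ℝ) ^ 14 * ε ^ ((1 : ℝ) / 4) * nrm x₀ →
        ∃ v : Fin (n 0) → ℝ, ∃ L : ℝ,
          L < 0 ∧ HasDirDeriv (objf n W d m A x₀) x (-v) L) ∧
    ∀ x : Fin (n 0) → ℝ, x ≠ 0 →
      ∃ L : ℝ, L < 0 ∧ HasDirDeriv (objf n W d m A x₀) 0 x L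

/-!
Write `x' = W_{+,x} x`. Applied to the pairs `(x, y)`, `(x, x)` and `(y, y)`, the WDC gives
`⟨x', y'⟩ ≈ ⟨x, Q_{x,y} y⟩ = cos g(θ) ‖x‖ ‖y‖ / 2` and `‖x'‖² ≈ ‖x‖² / 2`, up to `ε ‖x‖ ‖y‖` and
`ε ‖x‖²`. Hence the cosine of the angle after one layer is within `5ε` of `cos g(θ)`, and since
`2 sin²(|α - β| / 2) ≤ |cos α - cos β|` on `[0, π]`, the angle itself is within `4√ε` of `g(θ)`.
As `g` is 1-Lipschitz on `[0, π]` (its derivative lies in `[0, 1]`), these one-layer errors add up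
over the `d` layers to `4d√ε`.
-/

open InnerProductGeometry WithLp

def gCos (θ : ℝ) : ℝ := (Real.cos θ * (π - θ) + Real.sin θ) / π

lemma gfun_mem_Icc (θ : ℝ) : gfun θ ∈ Icc 0 π := ⟨Real.arccos_nonneg _, Real.arccos_le_pi _⟩

lemma gCos_mem_Icc {θ : ℝ} (hθ : θ ∈ Icc 0 π) : gCos θ ∈ Icc (-1) 1 := by
  obtain ⟨h0, hπ⟩ := hθ
  have hsin := Real.sin_nonneg_of_nonneg_of_le_pi h0 hπ
  have hsin_le := Real.sin_le h0
  have := Real.neg_one_le_cos θ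
  have := Real.cos_le_one θ
  constructor
  · rw [gCos, le_div_iff₀ pi_pos]; nlinarith
  · rw [gCos, div_le_one pi_pos]; nlinarith

lemma gCos_mem_Ioo {θ : ℝ} (hθ : θ ∈ Ioo 0 π) : gCos θ ∈ Ioo (-1) 1 := by
  obtain ⟨h0, hπ⟩ := hθ
  have hsin := Real.sin_nonneg_of_nonneg_of_le_pi h0.le hπ.le
  have hsin_lt := Real.sin_lt h0
  have := Real.neg_one_le_cos θ
  have := Real.cos_le_one θ
  constructor
  · rw [gCos, lt_div_iff₀ pi_pos]; nlinarith
  · rw [gCos, div_lt_one pi_pos]; nlinarith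

lemma cos_gfun {θ : ℝ} (hθ : θ ∈ Icc 0 π) : Real.cos (gfun θ) = gCos θ :=
  Real.cos_arccos (gCos_mem_Icc hθ).1 (gCos_mem_Icc hθ).2

lemma hasDerivAt_gfun {θ : ℝ} (hθ : θ ∈ Ioo 0 π) :
    HasDerivAt gfun (Real.sin θ * (π - θ) / π / √(1 - gCos θ ^ 2)) θ := by
  have hcos : HasDerivAt gCos (-(Real.sin θ * (π - θ)) / π) θ :=
    ((((Real.hasDerivAt_cos θ).mul ((hasDerivAt_const θ π).sub (hasDerivAt_id' θ))).add
      (Real.hasDerivAt_sin θ)).div_const π).congr_deriv (by simp only [Pi.sub_apply]; ring)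
  exact ((Real.hasDerivAt_arccos (gCos_mem_Ioo hθ).1.ne' (gCos_mem_Ioo hθ).2.ne).comp θ
    hcos).congr_deriv (by ring)

lemma deriv_gfun_mem_Icc {θ : ℝ} (hθ : θ ∈ Ioo 0 π) : deriv gfun θ ∈ Icc 0 1 := by
  rw [(hasDerivAt_gfun hθ).deriv]
  obtain ⟨h0, hπ⟩ := hθ
  have hsin := Real.sin_nonneg_of_nonneg_of_le_pi h0.le hπ.le
  have hsin_le := Real.sin_le h0.le
  have hcos := Real.cos_le_one θ
  have hpyth := Real.sin_sq_add_cos_sq θ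
  have hgCos := gCos_mem_Ioo ⟨h0, hπ⟩
  have hpos : 0 < 1 - gCos θ ^ 2 := by nlinarith [hgCos.1, hgCos.2]
  have hnum : 0 ≤ Real.sin θ * (π - θ) / π := by
    have : 0 ≤ π - θ := by linarith
    positivity
  refine ⟨by positivity, (div_le_one (Real.sqrt_pos.2 hpos)).2 ?_⟩
  -- `(sin θ (π - θ))² + (π cos g(θ))² ≤ (π - θ + sin θ)² ≤ π²`
  refine Real.le_sqrt_of_sq_le ?_
  rw [gCos, div_pow, div_pow, le_sub_iff_add_le, ← add_div, div_le_one (by positivity)]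
  have hexpand : (Real.sin θ * (π - θ)) ^ 2 + (Real.cos θ * (π - θ) + Real.sin θ) ^ 2
      = (π - θ) ^ 2 + 2 * (Real.sin θ * (π - θ)) * Real.cos θ + Real.sin θ ^ 2 := by
    linear_combination (π - θ) ^ 2 * hpyth
  nlinarith [mul_nonneg (mul_nonneg hsin (sub_nonneg.2 hπ.le)) (sub_nonneg.2 hcos),
    mul_nonneg (sub_nonneg.2 hsin_le) (by linarith : 0 ≤ 2 * π - θ + Real.sin θ)]

lemma gfun_lipschitzOnWith : LipschitzOnWith 1 gfun (Icc 0 π) := by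
  have hcont : ContinuousOn gfun (Icc 0 π) := by
    unfold gfun; fun_prop
  have hdiff : DifferentiableOn ℝ gfun (interior (Icc 0 π)) := by
    rw [interior_Icc]
    exact fun θ hθ => (hasDerivAt_gfun hθ).differentiableAt.differentiableWithinAt
  have hbounds : ∀ θ ∈ interior (Icc 0 π), deriv gfun θ ∈ Icc 0 1 := by
    rw [interior_Icc]
    exact fun θ hθ => deriv_gfun_mem_Icc hθ
  have hmono := monotoneOn_of_deriv_nonneg (convex_Icc 0 π) hcont hdiff
    fun θ hθ => (hbounds θ hθ).1
  have hle := (convex_Icc 0 π).image_sub_le_mul_sub_of_deriv_le hcont hdiff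
    fun θ hθ => (hbounds θ hθ).2
  refine LipschitzOnWith.of_le_add fun a ha b hb => ?_
  rcases le_total a b with hab | hba
  · linarith [hmono ha hb hab, dist_nonneg (x := a) (y := b)]
  · have := hle b hb a ha hba
    rw [Real.dist_eq, abs_of_nonneg (sub_nonneg.2 hba)]
    linarith

lemma two_mul_sin_sq_le_abs_cos_sub {α β : ℝ} (hα : α ∈ Icc 0 π) (hβ : β ∈ Icc 0 π) :
    2 * Real.sin (|α - β| / 2) ^ 2 ≤ |Real.cos α - Real.cos β| := by
  wlog hle : β ≤ α generalizing α β
  · rw [abs_sub_comm, abs_sub_comm (Real.cos α)]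
    exact this hβ hα (le_of_not_ge hle)
  obtain ⟨hα0, hαπ⟩ := hα
  obtain ⟨hβ0, hβπ⟩ := hβ
  rw [abs_of_nonneg (sub_nonneg.2 hle), abs_sub_comm]
  refine le_trans ?_ (le_abs_self _)
  have hcos : Real.cos β - Real.cos α
      = 2 * Real.sin ((α + β) / 2) * Real.sin ((α - β) / 2) := by
    rw [Real.cos_sub_cos, show (β - α) / 2 = -((α - β) / 2) by ring, Real.sin_neg, add_comm]
    ring
  have hsin_sub : Real.sin ((α + β) / 2) - Real.sin ((α - β) / 2)
      = 2 * Real.sin (β / 2) * Real.cos (α / 2) := by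
    rw [Real.sin_sub_sin]; ring_nf
  have hsβ : 0 ≤ Real.sin (β / 2) :=
    Real.sin_nonneg_of_nonneg_of_le_pi (by linarith) (by linarith)
  have hcα : 0 ≤ Real.cos (α / 2) := Real.cos_nonneg_of_mem_Icc ⟨by linarith, by linarith⟩
  have hsδ : 0 ≤ Real.sin ((α - β) / 2) :=
    Real.sin_nonneg_of_nonneg_of_le_pi (by linarith) (by linarith)
  nlinarith [mul_nonneg hsβ hcα]

lemma le_two_mul_of_sin_sq_le {δ t : ℝ} (hδ : δ ∈ Icc 0 (π / 2)) (ht0 : 0 ≤ t)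
    (ht : t ≤ 1 / 10) (h : Real.sin δ ^ 2 ≤ 5 / 2 * t ^ 2) : δ ≤ 2 * t := by
  by_contra! hlt
  have hpos : 0 < Real.sin δ :=
    Real.sin_pos_of_pos_of_lt_pi (by linarith) (by linarith [hδ.2, pi_pos])
  have hmono : Real.sin (2 * t) ≤ Real.sin δ :=
    Real.sin_le_sin_of_le_of_le_pi_div_two (by linarith [pi_pos]) hδ.2 hlt.le
  -- `sin u ≥ u - u³/6 ≥ (149/150) u` for `u = 2t ≤ 1/5`
  have hcube := Real.sin_ge_sub_cube (by linarith : 0 ≤ 2 * t)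
  have hlow : 2 * t * (149 / 150) ≤ Real.sin δ := by nlinarith
  nlinarith

lemma abs_sub_le_of_abs_cos_sub_le {α β ε : ℝ} (hα : α ∈ Icc 0 π) (hβ : β ∈ Icc 0 π)
    (hε0 : 0 ≤ ε) (hε : ε ≤ 1 / 100) (h : |Real.cos α - Real.cos β| ≤ 5 * ε) :
    |α - β| ≤ 4 * √ε := by
  have hsqrt : √ε ≤ 1 / 10 :=
    Real.sqrt_le_iff.2 ⟨by norm_num, by linarith⟩
  have hδ : |α - β| / 2 ∈ Icc 0 (π / 2) := by
    refine ⟨by positivity, ?_⟩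
    have : |α - β| ≤ π := abs_sub_le_iff.2 ⟨by linarith [hα.2, hβ.1], by linarith [hα.1, hβ.2]⟩
    linarith
  have hsin : Real.sin (|α - β| / 2) ^ 2 ≤ 5 / 2 * √ε ^ 2 := by
    rw [Real.sq_sqrt hε0]
    linarith [two_mul_sin_sq_le_abs_cos_sub hα hβ]
  linarith [le_two_mul_of_sin_sq_le hδ (Real.sqrt_nonneg ε) hsqrt hsin]

lemma abs_mul_sub_half_mul_le {X Y a b ε : ℝ} (hX : 0 ≤ X) (hY : 0 ≤ Y) (ha : 0 ≤ a)
    (hb : 0 ≤ b) (hε0 : 0 ≤ ε) (hε : ε ≤ 1 / 2) (hXa : |X ^ 2 - a ^ 2 / 2| ≤ ε * a ^ 2)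
    (hYb : |Y ^ 2 - b ^ 2 / 2| ≤ ε * b ^ 2) :
    |X * Y - a * b / 2| ≤ ε * (a * b) := by
  obtain ⟨hXa₁, hXa₂⟩ := abs_le.1 hXa
  obtain ⟨hYb₁, hYb₂⟩ := abs_le.1 hYb
  have hXY : 0 ≤ X * Y := mul_nonneg hX hY
  have hlow : ((1 / 2 - ε) * (a * b)) ^ 2 ≤ (X * Y) ^ 2 :=
    calc ((1 / 2 - ε) * (a * b)) ^ 2 = ((1 / 2 - ε) * a ^ 2) * ((1 / 2 - ε) * b ^ 2) := by ring
      _ ≤ X ^ 2 * Y ^ 2 := mul_le_mul (by linarith) (by linarith) (by nlinarith) (by positivity)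
      _ = (X * Y) ^ 2 := by ring
  have hupp : (X * Y) ^ 2 ≤ ((1 / 2 + ε) * (a * b)) ^ 2 :=
    calc (X * Y) ^ 2 = X ^ 2 * Y ^ 2 := by ring
      _ ≤ ((1 / 2 + ε) * a ^ 2) * ((1 / 2 + ε) * b ^ 2) :=
        mul_le_mul (by linarith) (by linarith) (by positivity) (by positivity)
      _ = ((1 / 2 + ε) * (a * b)) ^ 2 := by ring
  have h₁ := (pow_le_pow_iff_left₀ (by nlinarith [mul_nonneg ha hb]) hXY two_ne_zero).1 hlow
  have h₂ := (pow_le_pow_iff_left₀ hXY (by positivity) two_ne_zero).1 hupp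
  rw [abs_le]
  constructor <;> linarith

lemma abs_div_sub_le {p N s C ε : ℝ} (hs : 0 < s) (hC : |C| ≤ 1) (hε : ε ≤ 1 / 10)
    (hp : |p - C / 2 * s| ≤ ε * s) (hN : |N - s / 2| ≤ ε * s) : |p / N - C| ≤ 5 * ε := by
  have hε0 : 0 ≤ ε := nonneg_of_mul_nonneg_left ((abs_nonneg _).trans hp) hs
  have hNlow : (1 / 2 - ε) * s ≤ N := by linarith [(abs_le.1 hN).1]
  have hNpos : 0 < N := lt_of_lt_of_le (by nlinarith) hNlow
  have hnum : |p - C * N| ≤ 5 * ε * N :=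
    calc |p - C * N| = |(p - C / 2 * s) - C * (N - s / 2)| := by ring_nf
      _ ≤ |p - C / 2 * s| + |C| * |N - s / 2| := by rw [← abs_mul]; exact abs_sub _ _
      _ ≤ ε * s + 1 * (ε * s) := by gcongr
      _ ≤ 5 * ε * ((1 / 2 - ε) * s) := by
        nlinarith [mul_nonneg (mul_nonneg hε0 hs.le) (by linarith : 0 ≤ 1 / 10 - ε)]
      _ ≤ 5 * ε * N := by gcongr
  rwa [show p / N - C = (p - C * N) / N by field_simp, abs_div, abs_of_pos hNpos,
    div_le_iff₀ hNpos]

section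

variable {m n : ℕ}

lemma dotp_eq_inner (u v : Fin n → ℝ) : dotp u v = inner ℝ (toLp 2 u) (toLp 2 v) := by
  simp [dotp, PiLp.inner_apply, mul_comm]

lemma nrm_eq_norm (v : Fin n → ℝ) : nrm v = ‖toLp 2 v‖ := by
  rw [EuclideanSpace.norm_eq, nrm, dotp]
  simp [← sq]

lemma angl_eq_angle (u v : Fin n → ℝ) : angl u v = angle (toLp 2 u) (toLp 2 v) := by
  rw [angl, angle, dotp_eq_inner, nrm_eq_norm, nrm_eq_norm]

lemma dotp_eq_dotProduct (u v : Fin n → ℝ) : dotp u v = u ⬝ᵥ v := rfl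

lemma nrm_sq (v : Fin n → ℝ) : nrm v ^ 2 = dotp v v := by
  rw [nrm_eq_norm, dotp_eq_inner, real_inner_self_eq_norm_sq]

lemma nrm_nonneg (v : Fin n → ℝ) : 0 ≤ nrm v := Real.sqrt_nonneg _

lemma nrm_pos {v : Fin n → ℝ} (hv : v ≠ 0) : 0 < nrm v := by
  rw [nrm_eq_norm, norm_pos_iff]
  exact fun h => hv (by simpa using congrArg ofLp h)

lemma abs_dotp_le (u v : Fin n → ℝ) : |dotp u v| ≤ nrm u * nrm v := by
  rw [dotp_eq_inner, nrm_eq_norm, nrm_eq_norm]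
  exact abs_real_inner_le_norm _ _

lemma cos_angl (u v : Fin n → ℝ) : Real.cos (angl u v) = dotp u v / (nrm u * nrm v) := by
  rw [angl_eq_angle, cos_angle, dotp_eq_inner, nrm_eq_norm, nrm_eq_norm]

lemma angl_mem_Icc (u v : Fin n → ℝ) : angl u v ∈ Icc 0 π := by
  rw [angl_eq_angle]
  exact ⟨angle_nonneg _ _, angle_le_pi _ _⟩

lemma angl_self {v : Fin n → ℝ} (hv : v ≠ 0) : angl v v = 0 := by
  rw [angl_eq_angle]
  exact angle_self fun h => hv (by simpa using congrArg ofLp h)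

lemma nrm_mulVec_le (M : Matrix (Fin m) (Fin n) ℝ) (v : Fin n → ℝ) :
    nrm (M *ᵥ v) ≤ specNorm M * nrm v := by
  rw [nrm_eq_norm, nrm_eq_norm]
  exact (LinearMap.toContinuousLinearMap (Matrix.toEuclideanLin M)).le_opNorm (toLp 2 v)

lemma abs_dotp_mulVec_le (M : Matrix (Fin m) (Fin n) ℝ) (u : Fin m → ℝ) (v : Fin n → ℝ) :
    |dotp u (M *ᵥ v)| ≤ specNorm M * (nrm u * nrm v) :=
  calc |dotp u (M *ᵥ v)| ≤ nrm u * nrm (M *ᵥ v) := abs_dotp_le _ _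
    _ ≤ nrm u * (specNorm M * nrm v) := by gcongr; exacts [nrm_nonneg u, nrm_mulVec_le M v]
    _ = specNorm M * (nrm u * nrm v) := by ring

lemma dotProduct_inv_nrm_smul_self {x : Fin n → ℝ} (hx : x ≠ 0) :
    ((nrm x)⁻¹ • x) ⬝ᵥ ((nrm x)⁻¹ • x) = 1 := by
  have := nrm_pos hx
  rw [dotProduct_smul, smul_dotProduct, ← dotp_eq_dotProduct, ← nrm_sq, smul_eq_mul, smul_eq_mul]
  field_simp

lemma dotp_swapMat_mulVec {x y : Fin n → ℝ} (hx : x ≠ 0) (hy : y ≠ 0) :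
    dotp x (swapMat x y *ᵥ y) = nrm x * nrm y := by
  have hu := dotProduct_inv_nrm_smul_self hx
  have hv := dotProduct_inv_nrm_smul_self hy
  have key : ((nrm x)⁻¹ • x) ⬝ᵥ (swapMat x y *ᵥ ((nrm y)⁻¹ • y)) = 1 := by
    simp only [swapMat, dotp_eq_dotProduct]
    generalize (nrm x)⁻¹ • x = u at hu ⊢
    generalize (nrm y)⁻¹ • y = v at hv ⊢
    have hvu : v ⬝ᵥ u = u ⬝ᵥ v := dotProduct_comm _ _
    have hww : (v - (u ⬝ᵥ v) • u) ⬝ᵥ (v - (u ⬝ᵥ v) • u) = 1 - (u ⬝ᵥ v) ^ 2 := by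
      simp only [sub_dotProduct, dotProduct_sub, smul_dotProduct, dotProduct_smul, hu, hv, hvu,
        smul_eq_mul]
      ring
    simp only [hww]
    by_cases h : 1 - (u ⬝ᵥ v) ^ 2 = 0
    · simp only [if_pos h, Matrix.smul_mulVec, vecMulVec_mulVec, op_smul_eq_smul,
        dotProduct_smul, hu, smul_eq_mul]
      linear_combination -h
    · simp only [if_neg h, Matrix.sub_mulVec, Matrix.add_mulVec, Matrix.smul_mulVec,
        vecMulVec_mulVec, op_smul_eq_smul, dotProduct_add, dotProduct_sub, dotProduct_smul,
        sub_dotProduct, smul_dotProduct, hu, hv, smul_eq_mul]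
      field_simp
      ring
  have := nrm_pos hx
  have := nrm_pos hy
  calc dotp x (swapMat x y *ᵥ y)
      = nrm x * nrm y * (((nrm x)⁻¹ • x) ⬝ᵥ (swapMat x y *ᵥ ((nrm y)⁻¹ • y))) := by
        rw [Matrix.mulVec_smul, dotProduct_smul, smul_dotProduct, smul_eq_mul, smul_eq_mul,
          dotp_eq_dotProduct]
        field_simp
    _ = nrm x * nrm y := by rw [key, mul_one]

lemma nrm_zero : nrm (0 : Fin n → ℝ) = 0 := by simp [nrm, dotp]

lemma dotp_mulVec_mulVec (A B : Matrix (Fin m) (Fin n) ℝ) (x y : Fin n → ℝ) :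
    dotp (A *ᵥ x) (B *ᵥ y) = dotp x ((Aᵀ * B) *ᵥ y) := by
  simp only [dotp_eq_dotProduct, ← Matrix.mulVec_mulVec, Matrix.dotProduct_mulVec,
    Matrix.vecMul_transpose]

lemma dotp_Qmat_mulVec {x y : Fin n → ℝ} (hx : x ≠ 0) (hy : y ≠ 0) :
    dotp x (Qmat x y *ᵥ y) = Real.cos (gfun (angl x y)) / 2 * (nrm x * nrm y) := by
  have hxy : dotp x y = Real.cos (angl x y) * (nrm x * nrm y) := by
    rw [cos_angl, div_mul_cancel₀ _ (mul_pos (nrm_pos hx) (nrm_pos hy)).ne']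
  rw [cos_gfun (angl_mem_Icc x y), gCos, Qmat, Matrix.add_mulVec, Matrix.smul_mulVec,
    Matrix.smul_mulVec, Matrix.one_mulVec, dotp_eq_dotProduct, dotProduct_add, dotProduct_smul,
    dotProduct_smul, ← dotp_eq_dotProduct, ← dotp_eq_dotProduct, dotp_swapMat_mulVec hx hy, hxy,
    smul_eq_mul, smul_eq_mul]
  field_simp

lemma abs_dotp_posPart_mulVec_sub_le {W : Matrix (Fin m) (Fin n) ℝ} {ε : ℝ} (hW : WDC W ε)
    {x y : Fin n → ℝ} (hx : x ≠ 0) (hy : y ≠ 0) :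
    |dotp (posPart W x *ᵥ x) (posPart W y *ᵥ y)
        - Real.cos (gfun (angl x y)) / 2 * (nrm x * nrm y)| ≤ ε * (nrm x * nrm y) := by
  rw [dotp_mulVec_mulVec, ← dotp_Qmat_mulVec hx hy, dotp_eq_dotProduct, dotp_eq_dotProduct,
    ← dotProduct_sub, ← Matrix.sub_mulVec, ← dotp_eq_dotProduct]
  exact (abs_dotp_mulVec_le _ x y).trans
    (mul_le_mul_of_nonneg_right (hW x y hx hy) (mul_nonneg (nrm_nonneg x) (nrm_nonneg y)))

lemma abs_nrm_posPart_mulVec_sq_sub_le {W : Matrix (Fin m) (Fin n) ℝ} {ε : ℝ} (hW : WDC W ε)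
    {x : Fin n → ℝ} (hx : x ≠ 0) :
    |nrm (posPart W x *ᵥ x) ^ 2 - nrm x ^ 2 / 2| ≤ ε * nrm x ^ 2 := by
  have hgfun : Real.cos (gfun 0) = 1 := by
    rw [cos_gfun ⟨le_rfl, pi_pos.le⟩, gCos]
    simp [pi_pos.ne']
  simpa [nrm_sq, angl_self hx, hgfun, ← sq, div_eq_inv_mul] using
    abs_dotp_posPart_mulVec_sub_le hW hx hx

lemma posPart_mulVec_ne_zero {W : Matrix (Fin m) (Fin n) ℝ} {ε : ℝ} (hW : WDC W ε)
    (hε : ε < 1 / 2) {x : Fin n → ℝ} (hx : x ≠ 0) : posPart W x *ᵥ x ≠ 0 := by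
  intro h
  have hxx := abs_nrm_posPart_mulVec_sq_sub_le hW hx
  have := nrm_pos hx
  rw [h, nrm_zero] at hxx
  nlinarith [(abs_le.1 hxx).1, mul_pos (pow_pos this 2) (sub_pos.2 hε)]

lemma angl_posPart_mulVec_sub_gfun_le {W : Matrix (Fin m) (Fin n) ℝ} {ε : ℝ} (hW : WDC W ε)
    (hε0 : 0 ≤ ε) (hε : ε ≤ 1 / 100) {x y : Fin n → ℝ} (hx : x ≠ 0) (hy : y ≠ 0) :
    posPart W x *ᵥ x ≠ 0 ∧ posPart W y *ᵥ y ≠ 0 ∧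
      |angl (posPart W x *ᵥ x) (posPart W y *ᵥ y) - gfun (angl x y)| ≤ 4 * √ε := by
  have hxx := abs_nrm_posPart_mulVec_sq_sub_le hW hx
  have hyy := abs_nrm_posPart_mulVec_sq_sub_le hW hy
  have hprod := abs_mul_sub_half_mul_le (nrm_nonneg _) (nrm_nonneg _) (nrm_nonneg x)
    (nrm_nonneg y) hε0 (by linarith) hxx hyy
  have hcos : |Real.cos (angl (posPart W x *ᵥ x) (posPart W y *ᵥ y))
      - Real.cos (gfun (angl x y))| ≤ 5 * ε := by
    rw [cos_angl]
    exact abs_div_sub_le (mul_pos (nrm_pos hx) (nrm_pos hy)) (Real.abs_cos_le_one _)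
      (by linarith) (abs_dotp_posPart_mulVec_sub_le hW hx hy) hprod
  exact ⟨posPart_mulVec_ne_zero hW (by linarith) hx,
    posPart_mulVec_ne_zero hW (by linarith) hy,
    abs_sub_le_of_abs_cos_sub_le (angl_mem_Icc _ _) (gfun_mem_Icc _) hε0 hε hcos⟩

end

lemma layerProd_succ_mulVec (n : ℕ → ℕ) (W : ∀ i : ℕ, Matrix (Fin (n (i + 1))) (Fin (n i)) ℝ)
    (d : ℕ) (x : Fin (n 0) → ℝ) :
    layerProd n W (d + 1) x *ᵥ x
      = posPart (W d) (layerProd n W d x *ᵥ x) *ᵥ (layerProd n W d x *ᵥ x) := by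
  rw [layerProd, Matrix.mulVec_mulVec]

lemma thetaSeq_mem_Icc {θ : ℝ} (hθ : θ ∈ Icc 0 π) : ∀ i, thetaSeq θ i ∈ Icc 0 π
  | 0 => hθ
  | _ + 1 => gfun_mem_Icc _

theorem abs_angl_layerProd_sub_thetaSeq_le (n : ℕ → ℕ)
    (W : ∀ i : ℕ, Matrix (Fin (n (i + 1))) (Fin (n i)) ℝ) {ε : ℝ} (hε0 : 0 ≤ ε)
    (hε : ε ≤ 1 / 100) {x y : Fin (n 0) → ℝ} (hx : x ≠ 0) (hy : y ≠ 0) :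
    ∀ d, (∀ i < d, WDC (W i) ε) →
      layerProd n W d x *ᵥ x ≠ 0 ∧ layerProd n W d y *ᵥ y ≠ 0 ∧
        |angl (layerProd n W d x *ᵥ x) (layerProd n W d y *ᵥ y) - thetaSeq (angl x y) d|
          ≤ 4 * d * √ε
  | 0, _ => by simp [layerProd, thetaSeq, hx, hy]
  | d + 1, hW => by
    obtain ⟨hxd, hyd, hangle⟩ :=
      abs_angl_layerProd_sub_thetaSeq_le n W hε0 hε hx hy d fun i hi => hW i (by omega)
    obtain ⟨hx', hy', hstep⟩ :=
      angl_posPart_mulVec_sub_gfun_le (hW d d.lt_succ_self) hε0 hε hxd hyd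
    rw [layerProd_succ_mulVec, layerProd_succ_mulVec]
    refine ⟨hx', hy', ?_⟩
    have hlip : |gfun (angl (layerProd n W d x *ᵥ x) (layerProd n W d y *ᵥ y))
        - gfun (thetaSeq (angl x y) d)|
        ≤ |angl (layerProd n W d x *ᵥ x) (layerProd n W d y *ᵥ y) - thetaSeq (angl x y) d| := by
      simpa [Real.dist_eq] using gfun_lipschitzOnWith.dist_le_mul _ (angl_mem_Icc _ _) _
        (thetaSeq_mem_Icc (angl_mem_Icc x y) d)
    calc _ ≤ 4 * √ε + 4 * d * √ε :=
          (abs_sub_le _ _ _).trans (add_le_add hstep (hlip.trans hangle))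
      _ = 4 * (d + 1 : ℕ) * √ε := by push_cast; ring

theorem statement7_general (d : ℕ) (ε : ℝ) (hε0 : 0 < ε)
    (hε1 : ε < ((d : ℝ) ^ 4)⁻¹ * (1 / (16 * π)) ^ 2)
    (n : ℕ → ℕ)
    (W : ∀ i : ℕ, Matrix (Fin (n (i + 1))) (Fin (n i)) ℝ)
    (hW : ∀ i < d, WDC (W i) ε) :
    ∀ x y : Fin (n 0) → ℝ, x ≠ 0 → y ≠ 0 →
      |angl ((layerProd n W d x).mulVec x) ((layerProd n W d y).mulVec y) -
          thetaSeq (angl x y) d| ≤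
        4 * d * Real.sqrt ε := by
  intro x y hx hy
  have hε : ε ≤ 1 / 100 :=
    calc ε ≤ ((d : ℝ) ^ 4)⁻¹ * (1 / (16 * π)) ^ 2 := hε1.le
      _ ≤ 1 * (1 / 10) ^ 2 := by
        gcongr
        · exact_mod_cast Nat.cast_inv_le_one (d ^ 4)
        · linarith [pi_gt_three]
      _ = 1 / 100 := by norm_num
  exact (abs_angl_layerProd_sub_thetaSeq_le n W hε0.le hε hx hy d hW).2.2

/-- under the WDC, the angle between the outputs concentrates
around `g^{∘d}` of the angle between the inputs. -/
theorem statement7 (d : ℕ) (hd : 2 ≤ d) (ε : ℝ) (hε0 : 0 < ε)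
    (hε1 : ε < ((d : ℝ) ^ 4)⁻¹ * (1 / (16 * π)) ^ 2)
    (n : ℕ → ℕ) (hn : ∀ i < d, n i < n (i + 1))
    (W : ∀ i : ℕ, Matrix (Fin (n (i + 1))) (Fin (n i)) ℝ)
    (hW : ∀ i < d, WDC (W i) ε) :
    ∀ x y : Fin (n 0) → ℝ, x ≠ 0 → y ≠ 0 →
      |angl ((layerProd n W d x).mulVec x) ((layerProd n W d y).mulVec y) -
          thetaSeq (angl x y) d| ≤
        4 * d * Real.sqrt ε :=
  statement7_general d ε hε0 hε1 n W hW
end DPR
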